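/- arXiv:1710.07369 — 3 statements merged into one kernel-verified Lean document; each statement's English description precedes it below -/
import Mathlib

section
/- (Theorem 1, NLOS case, limit form.) Fix η ≥ 1, ℓ > 0, complex numbers γ_1, …, γ_η, and real angles φ_1, …, φ_η, θ_1, …, θ_η such that for every i ≠ 1 one has e^{j(φ_i−φ_1)} ≠ 1 or e^{j(θ_i−θ_1)} ≠ 1. For N_r, N_t ∈ ℕ let H = √(ℓ/η) Σ_{i=1}^{η} γ_i a_{N_r}(φ_i) a_{N_t}(θ_i)^*, and let the received power with beams aligned to path 1 be P_{N_r,N_t} = |w^* H f|² where w = a_{N_r}(φ_1)/√N_r and f = a_{N_t}(θ_1)/√N_t. Then P_{N_r,N_t}/(N_r N_t) → ℓ |γ_1|² / η as N_r → ∞ and N_t → ∞. -/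
open Complex Finset Filter

lemma geom_div_bounded (z : ℂ) (hz : ‖z‖ ≤ 1) (N : ℕ) :
    ‖(∑ k ∈ Finset.range N, z ^ k) / (N : ℂ)‖ ≤ 1 := by
  rw [norm_div]
  have h1 : ‖∑ k ∈ Finset.range N, z ^ k‖ ≤ N := by
    calc ‖∑ k ∈ Finset.range N, z ^ k‖ ≤ ∑ k ∈ Finset.range N, ‖z ^ k‖ :=
          norm_sum_le _ _
      _ ≤ ∑ k ∈ Finset.range N, 1 := by
          refine Finset.sum_le_sum fun k _ => ?_
          rw [norm_pow]; exact pow_le_one₀ (norm_nonneg z) hz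
      _ = N := by simp
  have h2 : ‖(N : ℂ)‖ = (N : ℝ) := by simp
  rw [h2]
  exact div_le_one_of_le₀ h1 (Nat.cast_nonneg N)

lemma geom_div_tendsto_zero (z : ℂ) (hz : ‖z‖ ≤ 1) (hz1 : z ≠ 1) :
    Tendsto (fun N : ℕ => (∑ k ∈ Finset.range N, z ^ k) / (N : ℂ)) atTop (nhds 0) := by
  have hb : ∀ N : ℕ, ‖(∑ k ∈ Finset.range N, z ^ k) / (N : ℂ)‖ ≤ (2 / ‖z - 1‖) / N := by
    intro N
    rw [norm_div]
    have h1 : ‖∑ k ∈ Finset.range N, z ^ k‖ ≤ 2 / ‖z - 1‖ := by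
      rw [geom_sum_eq hz1, norm_div]
      have h2 : ‖z ^ N - 1‖ ≤ 2 := by
        calc ‖z ^ N - 1‖ ≤ ‖z ^ N‖ + ‖(1:ℂ)‖ := norm_sub_le _ _
          _ ≤ 1 + 1 := by
              rw [norm_pow, norm_one]
              gcongr
              exact pow_le_one₀ (norm_nonneg z) hz
          _ = 2 := by norm_num
      gcongr
    have h3 : ‖(N : ℂ)‖ = (N : ℝ) := by simp
    rw [h3]
    gcongr
  refine squeeze_zero_norm hb ?_
  exact tendsto_const_div_atTop_nhds_zero_nat _

lemma sum_sum_sum_comm {n m p : ℕ} (f : Fin n → Fin m → Fin p → ℂ) :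
    ∑ a, ∑ b, ∑ i, f a b i = ∑ i, ∑ a, ∑ b, f a b i := by
  calc ∑ a, ∑ b, ∑ i, f a b i = ∑ a, ∑ i, ∑ b, f a b i :=
        Finset.sum_congr rfl fun a _ => Finset.sum_comm
    _ = ∑ i, ∑ a, ∑ b, f a b i := Finset.sum_comm

lemma triple_factor {n m : ℕ} (K c : ℂ) (A : Fin n → ℂ) (B : Fin m → ℂ) :
    ∑ a, ∑ b, K * (c * A a * B b) = K * (c * (∑ a, A a) * (∑ b, B b)) := by
  have h1 : ∀ a, ∑ b, K * (c * A a * B b) = (K * c * A a) * ∑ b, B b := by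
    intro a
    rw [Finset.mul_sum]
    exact Finset.sum_congr rfl fun b _ => by ring
  simp only [h1]
  rw [← Finset.sum_mul, ← Finset.mul_sum]
  ring

/-- Uniform linear array response vector `a_N(φ) = (1, e^{-jφ}, …, e^{-j(N-1)φ})`. -/
noncomputable def ula (N : ℕ) (φ : ℝ) : Fin N → ℂ :=
  fun k => Complex.exp (-(Complex.I) * (k : ℕ) * (φ : ℂ))

lemma conj_ula (N : ℕ) (α : ℝ) (a : Fin N) :
    (starRingEnd ℂ) (ula N α a) = Complex.exp (Complex.I * (a : ℕ) * (α : ℂ)) := by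
  rw [ula, ← Complex.exp_conj]
  congr 1
  simp [map_mul]

lemma conj_ula_mul (N : ℕ) (α β : ℝ) (a : Fin N) :
    (starRingEnd ℂ) (ula N α a) * ula N β a
      = Complex.exp (Complex.I * ((α : ℂ) - (β : ℂ))) ^ (a : ℕ) := by
  rw [conj_ula, ula, ← Complex.exp_add, ← Complex.exp_nat_mul]
  congr 1
  ring

theorem nlos_beamformed_power_limit
    (η : ℕ) (hη : 0 < η) (ℓ : ℝ) (hℓ : 0 < ℓ)
    (γ : Fin η → ℂ) (φ θ : Fin η → ℝ)
    (hangles : ∀ i : Fin η, i ≠ ⟨0, hη⟩ →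
      Complex.exp (Complex.I * ((φ i : ℂ) - (φ ⟨0, hη⟩ : ℂ))) ≠ 1 ∨
      Complex.exp (Complex.I * ((θ i : ℂ) - (θ ⟨0, hη⟩ : ℂ))) ≠ 1)
    (H : (Nr : ℕ) → (Nt : ℕ) → Fin Nr → Fin Nt → ℂ)
    (hH : ∀ Nr Nt, H Nr Nt = fun a b => (Real.sqrt (ℓ / η) : ℂ) *
      ∑ i, γ i * ula Nr (φ i) a * (starRingEnd ℂ) (ula Nt (θ i) b))
    (P : ℕ → ℕ → ℝ)
    (hP : ∀ Nr Nt, P Nr Nt =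
      ‖∑ a, ∑ b, (starRingEnd ℂ) (ula Nr (φ ⟨0, hη⟩) a / (Real.sqrt Nr : ℂ)) *
        H Nr Nt a b * (ula Nt (θ ⟨0, hη⟩) b / (Real.sqrt Nt : ℂ))‖ ^ 2) :
    Tendsto (fun p : ℕ × ℕ => P p.1 p.2 / ((p.1 : ℝ) * (p.2 : ℝ)))
      (atTop ×ˢ atTop) (nhds (ℓ * ‖γ ⟨0, hη⟩‖ ^ 2 / η)) := by
  set i0 : Fin η := ⟨0, hη⟩ with hi0def
  set zr : Fin η → ℂ := fun i => Complex.exp (Complex.I * ((φ i0 : ℂ) - (φ i : ℂ))) with hzr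
  set zt : Fin η → ℂ := fun i => Complex.exp (Complex.I * ((θ i : ℂ) - (θ i0 : ℂ))) with hzt
  set F : ℕ × ℕ → ℂ := fun p => ∑ i, γ i *
      ((∑ k ∈ Finset.range p.1, zr i ^ k) / (p.1 : ℂ)) *
      ((∑ k ∈ Finset.range p.2, zt i ^ k) / (p.2 : ℂ)) with hF
  have hnzr : ∀ i, ‖zr i‖ = 1 := by
    intro i
    simp [hzr, Complex.norm_exp]
  have hnzt : ∀ i, ‖zt i‖ = 1 := by
    intro i
    simp [hzt, Complex.norm_exp]
  have hzr1 : zr i0 = 1 := by simp [hzr]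
  have hzt1 : zt i0 = 1 := by simp [hzt]
  -- eventual positivity
  have hev : ∀ᶠ p : ℕ × ℕ in atTop ×ˢ atTop, 1 ≤ p.1 ∧ 1 ≤ p.2 := by
    filter_upwards [(eventually_ge_atTop 1).prod_inl atTop,
      (eventually_ge_atTop 1).prod_inr atTop] with p h1 h2
    exact ⟨h1, h2⟩
  -- Step 1 : F tends to γ i0
  have hFlim : Tendsto F (atTop ×ˢ atTop) (nhds (γ i0)) := by
    have hsum : γ i0 = ∑ i, (if i = i0 then γ i0 else 0) := by simp
    rw [hF, hsum]
    refine tendsto_finset_sum _ fun i _ => ?_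
    by_cases hi : i = i0
    · subst hi
      simp only [if_pos rfl]
      refine Tendsto.congr' ?_ tendsto_const_nhds
      filter_upwards [hev] with p hp
      have h1 : ((p.1 : ℂ)) ≠ 0 := Nat.cast_ne_zero.mpr (Nat.one_le_iff_ne_zero.mp hp.1)
      have h2 : ((p.2 : ℂ)) ≠ 0 := Nat.cast_ne_zero.mpr (Nat.one_le_iff_ne_zero.mp hp.2)
      simp [hzr1, hzt1, div_self h1, div_self h2]
    · simp only [if_neg hi]
      rcases hangles i hi with hne | hne
      · -- zr i ≠ 1
        have hzne : zr i ≠ 1 := by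
          intro h
          apply hne
          have hmul : zr i * Complex.exp (Complex.I * ((φ i : ℂ) - (φ i0 : ℂ))) = 1 := by
            rw [hzr, ← Complex.exp_add,
              show Complex.I * ((φ i0 : ℂ) - (φ i : ℂ)) +
                Complex.I * ((φ i : ℂ) - (φ i0 : ℂ)) = 0 by ring, Complex.exp_zero]
          rwa [h, one_mul] at hmul
        have hA : Tendsto (fun p : ℕ × ℕ =>
            (∑ k ∈ Finset.range p.1, zr i ^ k) / (p.1 : ℂ)) (atTop ×ˢ atTop) (nhds 0) :=
          (geom_div_tendsto_zero (zr i) (le_of_eq (hnzr i)) hzne).comp tendsto_fst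
        have hbound : ∀ p : ℕ × ℕ,
            ‖γ i * ((∑ k ∈ Finset.range p.1, zr i ^ k) / (p.1 : ℂ)) *
              ((∑ k ∈ Finset.range p.2, zt i ^ k) / (p.2 : ℂ))‖
            ≤ ‖γ i‖ * ‖(∑ k ∈ Finset.range p.1, zr i ^ k) / (p.1 : ℂ)‖ := by
          intro p
          rw [norm_mul, norm_mul]
          calc ‖γ i‖ * ‖(∑ k ∈ Finset.range p.1, zr i ^ k) / (p.1 : ℂ)‖ *
                ‖(∑ k ∈ Finset.range p.2, zt i ^ k) / (p.2 : ℂ)‖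
              ≤ ‖γ i‖ * ‖(∑ k ∈ Finset.range p.1, zr i ^ k) / (p.1 : ℂ)‖ * 1 :=
                mul_le_mul_of_nonneg_left
                  (geom_div_bounded (zt i) (le_of_eq (hnzt i)) p.2) (by positivity)
            _ = _ := by ring
        refine squeeze_zero_norm hbound ?_
        have := (hA.norm).const_mul ‖γ i‖
        simpa using this
      · -- zt i ≠ 1
        have hzne : zt i ≠ 1 := by rw [hzt]; exact hne
        have hB : Tendsto (fun p : ℕ × ℕ =>
            (∑ k ∈ Finset.range p.2, zt i ^ k) / (p.2 : ℂ)) (atTop ×ˢ atTop) (nhds 0) :=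
          (geom_div_tendsto_zero (zt i) (le_of_eq (hnzt i)) hzne).comp tendsto_snd
        have hbound : ∀ p : ℕ × ℕ,
            ‖γ i * ((∑ k ∈ Finset.range p.1, zr i ^ k) / (p.1 : ℂ)) *
              ((∑ k ∈ Finset.range p.2, zt i ^ k) / (p.2 : ℂ))‖
            ≤ ‖γ i‖ * ‖(∑ k ∈ Finset.range p.2, zt i ^ k) / (p.2 : ℂ)‖ := by
          intro p
          rw [norm_mul, norm_mul]
          calc ‖γ i‖ * ‖(∑ k ∈ Finset.range p.1, zr i ^ k) / (p.1 : ℂ)‖ *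
                ‖(∑ k ∈ Finset.range p.2, zt i ^ k) / (p.2 : ℂ)‖
              ≤ ‖γ i‖ * 1 * ‖(∑ k ∈ Finset.range p.2, zt i ^ k) / (p.2 : ℂ)‖ :=
                mul_le_mul_of_nonneg_right
                  (mul_le_mul_of_nonneg_left
                    (geom_div_bounded (zr i) (le_of_eq (hnzr i)) p.1) (norm_nonneg _))
                  (norm_nonneg _)
            _ = _ := by ring
        refine squeeze_zero_norm hbound ?_
        have := (hB.norm).const_mul ‖γ i‖
        simpa using this
  -- Step 2 : eventual identity
  have heq : ∀ᶠ p : ℕ × ℕ in atTop ×ˢ atTop,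
      (ℓ / η) * ‖F p‖ ^ 2 = P p.1 p.2 / ((p.1 : ℝ) * (p.2 : ℝ)) := by
    filter_upwards [hev] with p hp
    obtain ⟨h1, h2⟩ := hp
    set Nr := p.1
    set Nt := p.2
    have hNr0 : (0:ℝ) < Nr := by exact_mod_cast h1
    have hNt0 : (0:ℝ) < Nt := by exact_mod_cast h2
    have hNrC : ((Nr : ℂ)) ≠ 0 := Nat.cast_ne_zero.mpr (Nat.one_le_iff_ne_zero.mp h1)
    have hNtC : ((Nt : ℂ)) ≠ 0 := Nat.cast_ne_zero.mpr (Nat.one_le_iff_ne_zero.mp h2)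
    have hlη : (0:ℝ) ≤ ℓ / η := by positivity
    -- the double sum
    set S : ℂ := ∑ i, γ i * (∑ k ∈ Finset.range Nr, zr i ^ k) *
        (∑ k ∈ Finset.range Nt, zt i ^ k) with hS
    set K : ℂ := (Real.sqrt (ℓ / η) : ℂ) / ((Real.sqrt Nr : ℂ) * (Real.sqrt Nt : ℂ)) with hK
    have hD : (∑ a, ∑ b, (starRingEnd ℂ) (ula Nr (φ i0) a / (Real.sqrt Nr : ℂ)) *
        H Nr Nt a b * (ula Nt (θ i0) b / (Real.sqrt Nt : ℂ))) = K * S := by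
      rw [hH]
      calc (∑ a, ∑ b, (starRingEnd ℂ) (ula Nr (φ i0) a / (Real.sqrt Nr : ℂ)) *
            ((Real.sqrt (ℓ / η) : ℂ) *
              ∑ i, γ i * ula Nr (φ i) a * (starRingEnd ℂ) (ula Nt (θ i) b)) *
            (ula Nt (θ i0) b / (Real.sqrt Nt : ℂ)))
          = ∑ a, ∑ b, ∑ i, K * (γ i *
              ((starRingEnd ℂ) (ula Nr (φ i0) a) * ula Nr (φ i) a) *
              ((starRingEnd ℂ) (ula Nt (θ i) b) * ula Nt (θ i0) b)) := by
            refine Finset.sum_congr rfl fun a _ => Finset.sum_congr rfl fun b _ => ?_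
            rw [map_div₀, Complex.conj_ofReal]
            simp only [Finset.mul_sum, Finset.sum_mul]
            refine Finset.sum_congr rfl fun i _ => ?_
            rw [hK]
            ring
        _ = ∑ i, ∑ a, ∑ b, K * (γ i *
              ((starRingEnd ℂ) (ula Nr (φ i0) a) * ula Nr (φ i) a) *
              ((starRingEnd ℂ) (ula Nt (θ i) b) * ula Nt (θ i0) b)) :=
            sum_sum_sum_comm _
        _ = ∑ i, K * (γ i *
              (∑ a, (starRingEnd ℂ) (ula Nr (φ i0) a) * ula Nr (φ i) a) *
              (∑ b, (starRingEnd ℂ) (ula Nt (θ i) b) * ula Nt (θ i0) b)) := by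
            refine Finset.sum_congr rfl fun i _ => ?_
            exact triple_factor K (γ i) _ _
        _ = K * S := by
            rw [hS, Finset.mul_sum]
            refine Finset.sum_congr rfl fun i _ => ?_
            have hA : (∑ a : Fin Nr, (starRingEnd ℂ) (ula Nr (φ i0) a) * ula Nr (φ i) a)
                = ∑ k ∈ Finset.range Nr, zr i ^ k := by
              rw [← Fin.sum_univ_eq_sum_range (fun k => zr i ^ k) Nr]
              exact Finset.sum_congr rfl fun a _ => conj_ula_mul Nr (φ i0) (φ i) a
            have hB : (∑ b : Fin Nt, (starRingEnd ℂ) (ula Nt (θ i) b) * ula Nt (θ i0) b)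
                = ∑ k ∈ Finset.range Nt, zt i ^ k := by
              rw [← Fin.sum_univ_eq_sum_range (fun k => zt i ^ k) Nt]
              exact Finset.sum_congr rfl fun b _ => conj_ula_mul Nt (θ i) (θ i0) b
            rw [hA, hB]
            try ring
    have hFS : F p = S / ((Nr : ℂ) * (Nt : ℂ)) := by
      rw [hF, hS, Finset.sum_div]
      refine Finset.sum_congr rfl fun i _ => ?_
      change γ i * ((∑ k ∈ Finset.range Nr, zr i ^ k) / (Nr : ℂ)) *
        ((∑ k ∈ Finset.range Nt, zt i ^ k) / (Nt : ℂ)) = _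
      field_simp
      try ring
    rw [hP, hD, hFS]
    rw [norm_mul, norm_div, mul_pow, div_pow]
    have hKn : ‖K‖ ^ 2 = (ℓ / η) / ((Nr : ℝ) * (Nt : ℝ)) := by
      rw [hK, norm_div, norm_mul]
      simp only [Complex.norm_real, Real.norm_eq_abs,
        _root_.abs_of_nonneg (Real.sqrt_nonneg _)]
      rw [div_pow, mul_pow, Real.sq_sqrt hlη, Real.sq_sqrt (le_of_lt hNr0),
        Real.sq_sqrt (le_of_lt hNt0)]
    rw [hKn]
    have hnn : ‖(Nr : ℂ) * (Nt : ℂ)‖ = (Nr : ℝ) * (Nt : ℝ) := by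
      rw [norm_mul]; simp
    rw [hnn]
    ring
  -- Conclusion
  have hfinal : Tendsto (fun p : ℕ × ℕ => (ℓ / η) * ‖F p‖ ^ 2)
      (atTop ×ˢ atTop) (nhds ((ℓ / η) * ‖γ i0‖ ^ 2)) :=
    ((hFlim.norm).pow 2).const_mul _
  have : (ℓ / (η:ℝ)) * ‖γ i0‖ ^ 2 = ℓ * ‖γ i0‖ ^ 2 / η := by ring
  rw [this] at hfinal
  exact hfinal.congr' heq
end

section
/- (Theorem 2.) Fix η ≥ 1, ℓ > 0, N_r, N_t ∈ ℕ and beamforming angles φ', θ' ∈ ℝ. Let γ_1, …, γ_η be independent complex random variables with E[γ_i] = 0 and E[|γ_i|²] = 1, and let (φ_1, θ_1), …, (φ_η, θ_η) be random angle pairs that are identically distributed (each pair (φ_i, θ_i) has the same joint law as (φ_1, θ_1)), with (γ_1, …, γ_η) independent of all the angles. Let H = √(ℓ/η) Σ_{i=1}^{η} γ_i a_{N_r}(φ_i) a_{N_t}(θ_i)^* be the NLOS channel, and let the received interference power be P^{multi} = |w^* H f|² with w = a_{N_r}(φ')/√N_r and f = a_{N_t}(θ')/√N_t. Then E[P^{multi}]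 = ℓ · E[ G_{N_r}(φ', φ_1) · G_{N_t}(θ_1, θ') ], i.e. the mean received power equals the mean received power E[P^{keyhole}] under the rank-one keyhole model. -/
open Complex Finset MeasureTheory ProbabilityTheory

/-- Hermitian inner product `u^* v = Σ_k conj(u_k) v_k` on `ℂ^N`. -/
noncomputable def hermInner {N : ℕ} (u v : Fin N → ℂ) : ℂ :=
  ∑ k, (starRingEnd ℂ) (u k) * v k

/-- Antenna gain pattern `G_N(φ, ψ) = |a_N(φ)^* a_N(ψ)|² / N`. -/
noncomputable def antennaGain (N : ℕ) (φ ψ : ℝ) : ℝ :=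
  ‖hermInner (ula N φ) (ula N ψ)‖ ^ 2 / N

section aux
variable {Ω : Type*} [MeasurableSpace Ω] {μ : Measure Ω}

/-- Complex version of independent product integral. -/
theorem indep_integral_mul_cx {X Y : Ω → ℂ} (h : IndepFun X Y μ)
    (hX : Integrable X μ) (hY : Integrable Y μ) :
    ∫ ω, X ω * Y ω ∂μ = (∫ ω, X ω ∂μ) * ∫ ω, Y ω ∂μ := by
  have hXY : Integrable (fun ω => X ω * Y ω) μ := h.integrable_mul hX hY
  have hre : ∀ {f : Ω → ℂ}, Integrable f μ → ∫ ω, (f ω).re ∂μ = (∫ ω, f ω ∂μ).re := by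
    intro f hf; simpa using integral_re hf
  have him : ∀ {f : Ω → ℂ}, Integrable f μ → ∫ ω, (f ω).im ∂μ = (∫ ω, f ω ∂μ).im := by
    intro f hf; simpa using integral_im hf
  have hXre : Integrable (fun ω => (X ω).re) μ := by simpa using hX.re
  have hXim : Integrable (fun ω => (X ω).im) μ := by simpa using hX.im
  have hYre : Integrable (fun ω => (Y ω).re) μ := by simpa using hY.re
  have hYim : Integrable (fun ω => (Y ω).im) μ := by simpa using hY.im
  have i11 : IndepFun (fun ω => (X ω).re) (fun ω => (Y ω).re) μ :=
    h.comp Complex.measurable_re Complex.measurable_re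
  have i12 : IndepFun (fun ω => (X ω).re) (fun ω => (Y ω).im) μ :=
    h.comp Complex.measurable_re Complex.measurable_im
  have i21 : IndepFun (fun ω => (X ω).im) (fun ω => (Y ω).re) μ :=
    h.comp Complex.measurable_im Complex.measurable_re
  have i22 : IndepFun (fun ω => (X ω).im) (fun ω => (Y ω).im) μ :=
    h.comp Complex.measurable_im Complex.measurable_im
  apply Complex.ext
  · rw [← hre hXY, Complex.mul_re, ← hre hX, ← him hX, ← hre hY, ← him hY]
    calc ∫ ω, (X ω * Y ω).re ∂μ
        = ∫ ω, ((X ω).re * (Y ω).re - (X ω).im * (Y ω).im) ∂μ := by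
          simp [Complex.mul_re]
      _ = (∫ ω, (X ω).re * (Y ω).re ∂μ) - ∫ ω, (X ω).im * (Y ω).im ∂μ :=
          integral_sub (i11.integrable_mul hXre hYre) (i22.integrable_mul hXim hYim)
      _ = _ := by
          rw [i11.integral_fun_mul_eq_mul_integral hXre.1 hYre.1, i22.integral_fun_mul_eq_mul_integral hXim.1 hYim.1]
  · rw [← him hXY, Complex.mul_im, ← hre hX, ← him hX, ← hre hY, ← him hY]
    calc ∫ ω, (X ω * Y ω).im ∂μ
        = ∫ ω, ((X ω).re * (Y ω).im + (X ω).im * (Y ω).re) ∂μ := by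
          simp [Complex.mul_im]
      _ = (∫ ω, (X ω).re * (Y ω).im ∂μ) + ∫ ω, (X ω).im * (Y ω).re ∂μ :=
          integral_add (i12.integrable_mul hXre hYim) (i21.integrable_mul hXim hYre)
      _ = _ := by
          rw [i12.integral_fun_mul_eq_mul_integral hXre.1 hYim.1, i21.integral_fun_mul_eq_mul_integral hXim.1 hYre.1]

end aux

lemma continuous_ula_apply (N : ℕ) (k : Fin N) : Continuous fun x : ℝ => ula N x k := by
  unfold ula
  exact Complex.continuous_exp.comp ((continuous_const.mul Complex.continuous_ofReal))

lemma norm_ula_apply (N : ℕ) (x : ℝ) (k : Fin N) : ‖ula N x k‖ = 1 := by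
  simp [ula, Complex.norm_exp]

lemma continuous_BR (N : ℕ) (φ' : ℝ) :
    Continuous fun x : ℝ => hermInner (ula N φ') (ula N x) := by
  unfold hermInner
  exact continuous_finset_sum _ fun k _ => continuous_const.mul (continuous_ula_apply N k)

lemma continuous_BT (N : ℕ) (θ' : ℝ) :
    Continuous fun x : ℝ => hermInner (ula N x) (ula N θ') := by
  unfold hermInner
  refine continuous_finset_sum _ fun k _ => Continuous.mul ?_ continuous_const
  exact Complex.continuous_conj.comp (continuous_ula_apply N k)

lemma norm_hermInner_le (N : ℕ) (x y : ℝ) : ‖hermInner (ula N x) (ula N y)‖ ≤ N := by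
  unfold hermInner
  calc ‖∑ k, (starRingEnd ℂ) (ula N x k) * ula N y k‖
      ≤ ∑ k : Fin N, ‖(starRingEnd ℂ) (ula N x k) * ula N y k‖ := norm_sum_le _ _
    _ ≤ ∑ _k : Fin N, 1 := by
        refine Finset.sum_le_sum fun k _ => ?_
        rw [norm_mul, RCLike.norm_conj, norm_ula_apply, norm_ula_apply]; norm_num
    _ = N := by simp

theorem mean_interference_power_eq_keyhole
    {Ω : Type*} [MeasurableSpace Ω] (μ : Measure Ω) [IsProbabilityMeasure μ]
    (η : ℕ) (hη : 0 < η) (ℓ : ℝ) (hℓ : 0 < ℓ) (Nr Nt : ℕ) (φ' θ' : ℝ)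
    (γ : Fin η → Ω → ℂ) (φ θ : Fin η → Ω → ℝ)
    (hγm : ∀ i, Measurable (γ i)) (hφm : ∀ i, Measurable (φ i))
    (hθm : ∀ i, Measurable (θ i))
    (hγindep : iIndepFun γ μ)
    (hmean : ∀ i, ∫ ω, γ i ω ∂μ = 0)
    (hγL2 : ∀ i, MemLp (γ i) 2 μ)
    (hvar : ∀ i, ∫ ω, ‖γ i ω‖ ^ 2 ∂μ = 1)
    (hid : ∀ i : Fin η, Measure.map (fun ω => (φ i ω, θ i ω)) μ =
      Measure.map (fun ω => (φ ⟨0, hη⟩ ω, θ ⟨0, hη⟩ ω)) μ)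
    (hindep : IndepFun (fun ω i => γ i ω)
      (fun ω => ((fun i => φ i ω), (fun i => θ i ω))) μ)
    (H : Ω → Fin Nr → Fin Nt → ℂ)
    (hH : ∀ ω, H ω = fun a b => (Real.sqrt (ℓ / η) : ℂ) *
      ∑ i, γ i ω * ula Nr (φ i ω) a * (starRingEnd ℂ) (ula Nt (θ i ω) b))
    (P : Ω → ℝ)
    (hP : ∀ ω, P ω =
      ‖∑ a, ∑ b, (starRingEnd ℂ) (ula Nr φ' a / (Real.sqrt Nr : ℂ)) *
        H ω a b * (ula Nt θ' b / (Real.sqrt Nt : ℂ))‖ ^ 2) :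
    ∫ ω, P ω ∂μ =
      ℓ * ∫ ω, antennaGain Nr φ' (φ ⟨0, hη⟩ ω) * antennaGain Nt (θ ⟨0, hη⟩ ω) θ' ∂μ := by
  set i0 : Fin η := ⟨0, hη⟩ with hi0
  set BR : ℝ → ℂ := fun x => hermInner (ula Nr φ') (ula Nr x) with hBR
  set BT : ℝ → ℂ := fun x => hermInner (ula Nt x) (ula Nt θ') with hBT
  set A : Fin η → Ω → ℂ := fun i ω => BR (φ i ω) * BT (θ i ω) with hA
  -- Step 1 : pointwise algebra
  have hPw : ∀ ω, P ω = ℓ / (η * Nr * Nt) * ‖∑ i, γ i ω * A i ω‖ ^ 2 := by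
    intro ω
    have key : (∑ a, ∑ b, (starRingEnd ℂ) (ula Nr φ' a / (Real.sqrt Nr : ℂ)) *
        H ω a b * (ula Nt θ' b / (Real.sqrt Nt : ℂ)))
        = ((Real.sqrt (ℓ / η) : ℂ) / ((Real.sqrt Nr : ℂ) * (Real.sqrt Nt : ℂ))) *
          ∑ i, γ i ω * A i ω := by
      rw [hH]
      have swap : ∀ (f : Fin Nr → Fin Nt → Fin η → ℂ),
          (∑ a, ∑ b, ∑ i, f a b i) = ∑ i, ∑ a, ∑ b, f a b i := by
        intro f
        rw [show (∑ a, ∑ b, ∑ i, f a b i) = ∑ a, ∑ i, ∑ b, f a b i from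
          Finset.sum_congr rfl fun a _ => Finset.sum_comm, Finset.sum_comm]
      calc (∑ a, ∑ b, (starRingEnd ℂ) (ula Nr φ' a / (Real.sqrt Nr : ℂ)) *
              ((Real.sqrt (ℓ / η) : ℂ) *
                ∑ i, γ i ω * ula Nr (φ i ω) a * (starRingEnd ℂ) (ula Nt (θ i ω) b)) *
              (ula Nt θ' b / (Real.sqrt Nt : ℂ)))
          = ∑ a, ∑ b, ∑ i, (starRingEnd ℂ) (ula Nr φ' a / (Real.sqrt Nr : ℂ)) *
              ((Real.sqrt (ℓ / η) : ℂ) *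
                (γ i ω * ula Nr (φ i ω) a * (starRingEnd ℂ) (ula Nt (θ i ω) b))) *
              (ula Nt θ' b / (Real.sqrt Nt : ℂ)) := by
            simp only [Finset.mul_sum, Finset.sum_mul]
        _ = ∑ i, ∑ a, ∑ b, (starRingEnd ℂ) (ula Nr φ' a / (Real.sqrt Nr : ℂ)) *
              ((Real.sqrt (ℓ / η) : ℂ) *
                (γ i ω * ula Nr (φ i ω) a * (starRingEnd ℂ) (ula Nt (θ i ω) b))) *
              (ula Nt θ' b / (Real.sqrt Nt : ℂ)) := swap _
        _ = _ := by
            rw [Finset.mul_sum]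
            refine Finset.sum_congr rfl fun i _ => ?_
            simp only [hA, hBR, hBT, hermInner]
            rw [Finset.sum_mul_sum]
            simp only [Finset.mul_sum]
            refine Finset.sum_congr rfl fun a _ => Finset.sum_congr rfl fun b _ => ?_
            simp only [map_div₀, Complex.conj_ofReal]
            ring
    rw [hP, key, norm_mul, mul_pow]
    congr 1
    rw [norm_div, norm_mul, Complex.norm_real, Complex.norm_real, Complex.norm_real,
      Real.norm_eq_abs, Real.norm_eq_abs, Real.norm_eq_abs,
      _root_.abs_of_nonneg (Real.sqrt_nonneg _), _root_.abs_of_nonneg (Real.sqrt_nonneg _),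
      _root_.abs_of_nonneg (Real.sqrt_nonneg _), div_pow, mul_pow,
      Real.sq_sqrt (by positivity : (0:ℝ) ≤ ℓ / η), Real.sq_sqrt (Nat.cast_nonneg Nr),
      Real.sq_sqrt (Nat.cast_nonneg Nt), div_div, ← mul_assoc]
  -- measurability and bounds for A
  have hAm : ∀ i, Measurable (A i) := fun i =>
    ((continuous_BR Nr φ').measurable.comp (hφm i)).mul
      ((continuous_BT Nt θ').measurable.comp (hθm i))
  have hAb : ∀ i ω, ‖A i ω‖ ≤ (Nr : ℝ) * Nt := by
    intro i ω
    rw [hA, norm_mul]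
    exact mul_le_mul (norm_hermInner_le _ _ _) (norm_hermInner_le _ _ _)
      (norm_nonneg _) (Nat.cast_nonneg _)
  -- integrability of squared norms of A
  have hAsq_int : ∀ i, Integrable (fun ω => ‖A i ω‖ ^ 2) μ := by
    intro i
    refine Integrable.mono' (integrable_const (((Nr : ℝ) * Nt) ^ 2))
      (((hAm i).norm.pow_const 2).aestronglyMeasurable) ?_
    filter_upwards with ω
    rw [Real.norm_eq_abs, _root_.abs_of_nonneg (by positivity)]
    exact pow_le_pow_left₀ (norm_nonneg _) (hAb i ω) 2
  -- integrability of γ squared norms and of products conj γ i * γ j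
  have hγsq_int : ∀ i, Integrable (fun ω => ‖γ i ω‖ ^ 2) μ := fun i =>
    (memLp_two_iff_integrable_sq_norm (hγL2 i).1).mp (hγL2 i)
  have hγint : ∀ i, Integrable (γ i) μ := fun i => (hγL2 i).integrable one_le_two
  have hg_int : ∀ i j, Integrable (fun ω => (starRingEnd ℂ) (γ i ω) * γ j ω) μ := by
    intro i j
    refine Integrable.mono' (((hγsq_int i).add (hγsq_int j)).div_const 2)
      ((((Complex.continuous_conj.measurable).comp (hγm i)).mul (hγm j)).aestronglyMeasurable) ?_
    filter_upwards with ω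
    simp only [Pi.add_apply]
    rw [norm_mul, RCLike.norm_conj]
    nlinarith [norm_nonneg (γ i ω), norm_nonneg (γ j ω), sq_nonneg (‖γ i ω‖ - ‖γ j ω‖)]
  -- integrability of products conj A i * A j
  have hh_int : ∀ i j, Integrable (fun ω => (starRingEnd ℂ) (A i ω) * A j ω) μ := by
    intro i j
    refine Integrable.mono' (integrable_const (((Nr : ℝ) * Nt) * ((Nr : ℝ) * Nt)))
      ((((Complex.continuous_conj.measurable).comp (hAm i)).mul (hAm j)).aestronglyMeasurable) ?_
    filter_upwards with ω
    rw [norm_mul, RCLike.norm_conj]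
    exact mul_le_mul (hAb i ω) (hAb j ω) (norm_nonneg _) (by positivity)
  -- the product functions f i j
  have hf_int : ∀ i j, Integrable
      (fun ω => ((starRingEnd ℂ) (A i ω) * A j ω) * ((starRingEnd ℂ) (γ i ω) * γ j ω)) μ := by
    intro i j
    refine Integrable.bdd_mul (c := ((Nr : ℝ) * Nt) * ((Nr : ℝ) * Nt)) (hg_int i j)
      ((((Complex.continuous_conj.measurable).comp (hAm i)).mul (hAm j)).aestronglyMeasurable) ?_
    filter_upwards with ω
    rw [norm_mul, RCLike.norm_conj]
    exact mul_le_mul (hAb i ω) (hAb j ω) (norm_nonneg _) (by positivity)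
  -- independence of (conj A i * A j) and (conj γ i * γ j)
  have hfun_indep : ∀ i j : Fin η, IndepFun
      (fun ω => (starRingEnd ℂ) (A i ω) * A j ω)
      (fun ω => (starRingEnd ℂ) (γ i ω) * γ j ω) μ := by
    intro i j
    have hF : Measurable fun p : (Fin η → ℝ) × (Fin η → ℝ) =>
        (starRingEnd ℂ) (BR (p.1 i) * BT (p.2 i)) * (BR (p.1 j) * BT (p.2 j)) := by
      have hBRm : Measurable BR := (continuous_BR Nr φ').measurable
      have hBTm : Measurable BT := (continuous_BT Nt θ').measurable
      exact (Complex.continuous_conj.measurable.comp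
        ((hBRm.comp ((measurable_pi_apply i).comp measurable_fst)).mul
          (hBTm.comp ((measurable_pi_apply i).comp measurable_snd)))).mul
        ((hBRm.comp ((measurable_pi_apply j).comp measurable_fst)).mul
          (hBTm.comp ((measurable_pi_apply j).comp measurable_snd)))
    have hG : Measurable fun v : Fin η → ℂ =>
        (starRingEnd ℂ) (v i) * v j :=
      (Complex.continuous_conj.measurable.comp (measurable_pi_apply i)).mul (measurable_pi_apply j)
    exact hindep.symm.comp hF hG
  -- helper equalities
  have hre : ∀ {f : Ω → ℂ}, Integrable f μ → ∫ ω, (f ω).re ∂μ = (∫ ω, f ω ∂μ).re := by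
    intro f hf; simpa using integral_re hf
  have hconj_mul_self : ∀ z : ℂ, (starRingEnd ℂ) z * z = ((‖z‖ ^ 2 : ℝ) : ℂ) := fun z => by
    rw [← Complex.normSq_eq_conj_mul_self, Complex.normSq_eq_norm_sq]
  have hAA : ∀ i, ∫ ω, (starRingEnd ℂ) (A i ω) * A i ω ∂μ =
      ((∫ ω, ‖A i ω‖ ^ 2 ∂μ : ℝ) : ℂ) := by
    intro i
    calc ∫ ω, (starRingEnd ℂ) (A i ω) * A i ω ∂μ
        = ∫ ω, ((‖A i ω‖ ^ 2 : ℝ) : ℂ) ∂μ :=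
          integral_congr_ae (Filter.Eventually.of_forall fun ω => hconj_mul_self _)
      _ = ((∫ ω, ‖A i ω‖ ^ 2 ∂μ : ℝ) : ℂ) := integral_ofReal (f := fun ω => ‖A i ω‖ ^ 2)
  have hγγ : ∀ i, ∫ ω, (starRingEnd ℂ) (γ i ω) * γ i ω ∂μ = 1 := by
    intro i
    calc ∫ ω, (starRingEnd ℂ) (γ i ω) * γ i ω ∂μ
        = ∫ ω, ((‖γ i ω‖ ^ 2 : ℝ) : ℂ) ∂μ :=
          integral_congr_ae (Filter.Eventually.of_forall fun ω => hconj_mul_self _)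
      _ = ((∫ ω, ‖γ i ω‖ ^ 2 ∂μ : ℝ) : ℂ) := integral_ofReal (f := fun ω => ‖γ i ω‖ ^ 2)
      _ = 1 := by rw [hvar i, Complex.ofReal_one]
  have hγcross : ∀ i j : Fin η, i ≠ j →
      ∫ ω, (starRingEnd ℂ) (γ i ω) * γ j ω ∂μ = 0 := by
    intro i j hij
    have hI : IndepFun (fun ω => (starRingEnd ℂ) (γ i ω)) (γ j) μ :=
      (hγindep.indepFun hij).comp Complex.continuous_conj.measurable measurable_id
    have hci : Integrable (fun ω => (starRingEnd ℂ) (γ i ω)) μ := by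
      refine Integrable.mono' (hγint i).norm
        ((Complex.continuous_conj.measurable.comp (hγm i)).aestronglyMeasurable) ?_
      filter_upwards with ω
      rw [RCLike.norm_conj]
    rw [indep_integral_mul_cx hI hci (hγint j), integral_conj, hmean, hmean]
    simp
  -- value of the mixed expectations
  have hfval : ∀ i j : Fin η,
      ∫ ω, ((starRingEnd ℂ) (A i ω) * A j ω) * ((starRingEnd ℂ) (γ i ω) * γ j ω) ∂μ =
      (∫ ω, (starRingEnd ℂ) (A i ω) * A j ω ∂μ) *
        ∫ ω, (starRingEnd ℂ) (γ i ω) * γ j ω ∂μ :=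
    fun i j => indep_integral_mul_cx (hfun_indep i j) (hh_int i j) (hg_int i j)
  -- pointwise expansion of the squared norm
  have hsq : ∀ ω, ‖∑ i, γ i ω * A i ω‖ ^ 2 =
      ∑ i, ∑ j, (((starRingEnd ℂ) (A i ω) * A j ω) *
        ((starRingEnd ℂ) (γ i ω) * γ j ω)).re := by
    intro ω
    have h1 : ((‖∑ i, γ i ω * A i ω‖ ^ 2 : ℝ) : ℂ) =
        (starRingEnd ℂ) (∑ i, γ i ω * A i ω) * ∑ j, γ j ω * A j ω :=
      (hconj_mul_self _).symm
    calc ‖∑ i, γ i ω * A i ω‖ ^ 2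
        = (((‖∑ i, γ i ω * A i ω‖ ^ 2 : ℝ) : ℂ)).re := (Complex.ofReal_re _).symm
      _ = ((starRingEnd ℂ) (∑ i, γ i ω * A i ω) * ∑ j, γ j ω * A j ω).re := by rw [h1]
      _ = _ := by
          rw [map_sum, Finset.sum_mul_sum]
          rw [Complex.re_sum]
          refine Finset.sum_congr rfl fun i _ => ?_
          rw [Complex.re_sum]
          refine Finset.sum_congr rfl fun j _ => ?_
          congr 1
          rw [map_mul]
          ring
  -- the main computation
  have hmain : ∫ ω, ‖∑ i, γ i ω * A i ω‖ ^ 2 ∂μ = ∑ i : Fin η, ∫ ω, ‖A i ω‖ ^ 2 ∂μ := by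
    calc ∫ ω, ‖∑ i, γ i ω * A i ω‖ ^ 2 ∂μ
        = ∫ ω, ∑ i, ∑ j, (((starRingEnd ℂ) (A i ω) * A j ω) *
            ((starRingEnd ℂ) (γ i ω) * γ j ω)).re ∂μ :=
          integral_congr_ae (Filter.Eventually.of_forall hsq)
      _ = ∑ i, ∑ j, ∫ ω, (((starRingEnd ℂ) (A i ω) * A j ω) *
            ((starRingEnd ℂ) (γ i ω) * γ j ω)).re ∂μ := by
          rw [integral_finset_sum _ fun i _ => integrable_finset_sum _ fun j _ => by
            simpa using (hf_int i j).re]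
          exact Finset.sum_congr rfl fun i _ =>
            integral_finset_sum _ fun j _ => by simpa using (hf_int i j).re
      _ = ∑ i, ∑ j, ((∫ ω, ((starRingEnd ℂ) (A i ω) * A j ω) *
            ((starRingEnd ℂ) (γ i ω) * γ j ω) ∂μ)).re :=
          Finset.sum_congr rfl fun i _ => Finset.sum_congr rfl fun j _ => hre (hf_int i j)
      _ = ∑ i : Fin η, ∫ ω, ‖A i ω‖ ^ 2 ∂μ := by
          refine Finset.sum_congr rfl fun i _ => ?_
          rw [Finset.sum_eq_single i]
          · rw [hfval i i, hγγ i, mul_one, hAA i, Complex.ofReal_re]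
          · intro j _ hji
            rw [hfval i j, hγcross i j (Ne.symm hji), mul_zero, Complex.zero_re]
          · intro h; exact absurd (Finset.mem_univ i) h
  -- identical distribution
  have hsame : ∀ i, ∫ ω, ‖A i ω‖ ^ 2 ∂μ = ∫ ω, ‖A i0 ω‖ ^ 2 ∂μ := by
    intro i
    have hg : Continuous fun p : ℝ × ℝ => ‖BR p.1 * BT p.2‖ ^ 2 :=
      ((((continuous_BR Nr φ').comp continuous_fst).mul
        ((continuous_BT Nt θ').comp continuous_snd)).norm.pow 2)
    have h1 : ∀ k : Fin η, ∫ ω, ‖A k ω‖ ^ 2 ∂μ =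
        ∫ p : ℝ × ℝ, ‖BR p.1 * BT p.2‖ ^ 2 ∂(Measure.map (fun ω => (φ k ω, θ k ω)) μ) := by
      intro k
      rw [integral_map ((hφm k).prodMk (hθm k)).aemeasurable hg.aestronglyMeasurable]
    rw [h1 i, h1 i0, hid i]
  -- arithmetic helper
  have harith : ∀ K : ℝ, ℓ / (η * Nr * Nt) * (η * K) = ℓ * (K / ((Nr : ℝ) * Nt)) := by
    intro K
    have hη' : (η : ℝ) ≠ 0 := Nat.cast_ne_zero.mpr hη.ne'
    rcases eq_or_ne ((Nr : ℝ) * Nt) 0 with h | h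
    · rw [mul_assoc, h, mul_zero, div_zero, zero_mul, div_zero, mul_zero]
    · obtain ⟨hNr, hNt⟩ := mul_ne_zero_iff.mp h
      field_simp
  -- assemble
  calc ∫ ω, P ω ∂μ
      = ∫ ω, ℓ / (η * Nr * Nt) * ‖∑ i, γ i ω * A i ω‖ ^ 2 ∂μ :=
        integral_congr_ae (Filter.Eventually.of_forall hPw)
    _ = ℓ / (η * Nr * Nt) * ∫ ω, ‖∑ i, γ i ω * A i ω‖ ^ 2 ∂μ := integral_const_mul _ _
    _ = ℓ / (η * Nr * Nt) * ((η : ℝ) * ∫ ω, ‖A i0 ω‖ ^ 2 ∂μ) := by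
        rw [hmain, Finset.sum_congr rfl fun i _ => hsame i]
        rw [Finset.sum_const, Finset.card_univ, Fintype.card_fin, nsmul_eq_mul]
    _ = ℓ * ((∫ ω, ‖A i0 ω‖ ^ 2 ∂μ) / ((Nr : ℝ) * Nt)) := harith _
    _ = ℓ * ∫ ω, ‖A i0 ω‖ ^ 2 / ((Nr : ℝ) * Nt) ∂μ := by rw [integral_div]
    _ = ℓ * ∫ ω, antennaGain Nr φ' (φ i0 ω) * antennaGain Nt (θ i0 ω) θ' ∂μ := by
        congr 1
        refine integral_congr_ae (Filter.Eventually.of_forall fun ω => ?_)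
        show ‖A i0 ω‖ ^ 2 / ((Nr : ℝ) * Nt) = _
        simp only [hA, hBR, hBT, antennaGain]
        rw [norm_mul, mul_pow, div_mul_div_comm]
end

section
/- (Corollary 1, independent fading case.) Fix η ≥ 1 and ℓ > 0. Let γ_1, …, γ_η be complex random variables such that |γ_1|², …, |γ_η|² are i.i.d. exponential with rate 1, and let φ_1, …, φ_η, θ_1, …, θ_η be random angles, independent of (γ_1, …, γ_η), such that almost surely e^{j(φ_i−φ_k)} ≠ 1 and e^{j(θ_i−θ_k)} ≠ 1 for all i ≠ k. Let I be a (random) index attaining max_i |γ_i|, and for N_r, N_t ∈ ℕ let P_{N_r,N_t} = |w^* H f|² with H = √(ℓ/η) Σ_{i=1}^{η} γ_i a_{N_r}(φ_i) a_{N_t}(θ_i)^*, w = a_{N_r}(φ_I)/√N_r and f = a_{N_t}(θ_I)/√N_t. Then almost surely P_{N_r,N_t}/(N_r N_t) → ℓ · max_i |γ_i|² / η as N_r, N_t → ∞, and the expectation of this almost-sure limit equals ℓ · (1/η) Σ_{k=1}^{η} 1/k; hence the correction factor Υ = E[lim P/(N_r N_t)] / ℓ equals (1/η) Σ_{k=1}^{η}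 1/k. -/
open Complex Finset Filter MeasureTheory ProbabilityTheory

section Aux

open Real Set

lemma exp_term_integrable (k : ℕ) :
    IntegrableOn (fun t : ℝ => Real.exp (-t) * (1 - Real.exp (-t))^k) (Ioi 0) := by
  apply (exp_neg_integrableOn_Ioi 0 (one_pos)).mono'
  · apply Measurable.aestronglyMeasurable; fun_prop
  · filter_upwards [ae_restrict_mem measurableSet_Ioi] with t ht
    have h1 : Real.exp (-t) ≤ 1 := Real.exp_le_one_iff.2 (by linarith [le_of_lt (Set.mem_Ioi.mp ht)])
    have h0 : 0 < Real.exp (-t) := Real.exp_pos _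
    have : |1 - Real.exp (-t)| ^ k ≤ 1 := by
      apply pow_le_one₀ (abs_nonneg _); rw [abs_le]; constructor <;> linarith
    calc ‖Real.exp (-t) * (1 - Real.exp (-t))^k‖
        = Real.exp (-t) * |1 - Real.exp (-t)|^k := by
          rw [norm_mul, Real.norm_eq_abs, Real.norm_eq_abs, abs_of_pos h0, _root_.abs_pow]
      _ ≤ Real.exp (-t) * 1 := by nlinarith
      _ = Real.exp (-1 * t) := by rw [mul_one]; ring_nf

lemma exp_term_integral (k : ℕ) :
    ∫ t in Ioi (0:ℝ), Real.exp (-t) * (1 - Real.exp (-t))^k = 1/(k+1) := by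
  have hd : ∀ t ∈ Ioi (0:ℝ), HasDerivAt (fun t : ℝ => (1 - Real.exp (-t))^(k+1) / (k+1))
      (Real.exp (-t) * (1 - Real.exp (-t))^k) t := by
    intro t ht
    have h1 : HasDerivAt (fun t : ℝ => 1 - Real.exp (-t)) (Real.exp (-t)) t := by
      have := (Real.hasDerivAt_exp (-t)).comp t (hasDerivAt_neg t)
      simpa using (this.const_sub 1)
    have h2 := (h1.pow (k+1)).div_const ((k:ℝ)+1)
    refine h2.congr_deriv ?_
    push_cast
    field_simp
  have hlim : Tendsto (fun t : ℝ => (1 - Real.exp (-t))^(k+1) / (k+1)) atTop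
      (nhds (1/(k+1))) := by
    have : Tendsto (fun t : ℝ => Real.exp (-t)) atTop (nhds 0) := by
      simpa using Real.tendsto_exp_neg_atTop_nhds_zero
    have := ((this.const_sub 1).pow (k+1)).div_const ((k:ℝ)+1)
    simpa using this
  have hc : ContinuousWithinAt (fun t : ℝ => (1 - Real.exp (-t))^(k+1) / ((k:ℝ)+1)) (Ici 0) 0 :=
    Continuous.continuousWithinAt (by fun_prop)
  have key := integral_Ioi_of_hasDerivAt_of_tendsto hc hd (exp_term_integrable k) hlim
  rw [key]
  simp

lemma tail_identity (η : ℕ) (t : ℝ) :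
    1 - (1 - Real.exp (-t))^η = ∑ k ∈ Finset.range η, Real.exp (-t) * (1 - Real.exp (-t))^k := by
  have := geom_sum_mul (1 - Real.exp (-t)) η
  have h2 : ∑ k ∈ Finset.range η, Real.exp (-t) * (1 - Real.exp (-t))^k
      = (∑ k ∈ Finset.range η, (1 - Real.exp (-t))^k) * Real.exp (-t) := by
    rw [Finset.sum_mul]; exact Finset.sum_congr rfl (fun k _ => by ring)
  rw [h2]; nlinarith [this]

lemma tail_integrable (η : ℕ) :
    IntegrableOn (fun t : ℝ => 1 - (1 - Real.exp (-t))^η) (Ioi 0) := by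
  have : (fun t : ℝ => 1 - (1 - Real.exp (-t))^η)
      = fun t => ∑ k ∈ Finset.range η, Real.exp (-t) * (1 - Real.exp (-t))^k := by
    funext t; exact tail_identity η t
  rw [this]
  exact integrable_finset_sum _ (fun k _ => exp_term_integrable k)

lemma tail_integral (η : ℕ) :
    ∫ t in Ioi (0:ℝ), (1 - (1 - Real.exp (-t))^η) = ∑ k ∈ Finset.range η, (1:ℝ)/(k+1) := by
  simp_rw [tail_identity η]
  rw [integral_finset_sum _ (fun k _ => exp_term_integrable k)]
  exact Finset.sum_congr rfl (fun k _ => exp_term_integral k)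

lemma max_exp_integral {Ω : Type*} [MeasurableSpace Ω] (μ : Measure Ω) [IsProbabilityMeasure μ]
    (η : ℕ) (X : Fin η → Ω → ℝ) (hXm : ∀ i, Measurable (X i))
    (hX0 : ∀ i ω, 0 ≤ X i ω)
    (hind : iIndepFun X μ)
    (hexp : ∀ i, ∀ t : ℝ, 0 ≤ t → μ {ω | t < X i ω} = ENNReal.ofReal (Real.exp (-t)))
    (ne : (Finset.univ : Finset (Fin η)).Nonempty) :
    Integrable (fun ω => Finset.univ.sup' ne (fun i => X i ω)) μ ∧
    ∫ ω, Finset.univ.sup' ne (fun i => X i ω) ∂μ = ∑ k ∈ Finset.range η, (1:ℝ)/(k+1) := by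
  set M : Ω → ℝ := fun ω => Finset.univ.sup' ne (fun i => X i ω) with hM
  have hMm : Measurable M := by
    have h := Finset.measurable_sup' ne (fun (i : Fin η) (_ : i ∈ Finset.univ) => hXm i)
    have h2 : M = Finset.univ.sup' ne X := by funext ω; rw [Finset.sup'_apply]
    rw [h2]; exact h
  have hM0 : ∀ ω, 0 ≤ M ω := by
    intro ω
    obtain ⟨i, _⟩ := ne
    exact le_trans (hX0 i ω) (Finset.le_sup' (fun i => X i ω) (Finset.mem_univ i))
  have htail : ∀ t : ℝ, 0 ≤ t →
      μ {ω | t < M ω} = ENNReal.ofReal (1 - (1 - Real.exp (-t))^η) := by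
    intro t ht
    have hexp1 : Real.exp (-t) ≤ 1 := Real.exp_le_one_iff.2 (by linarith)
    have hexp0 : 0 < Real.exp (-t) := Real.exp_pos _
    have hset : {ω | t < M ω} = (⋂ i, X i ⁻¹' Set.Iic t)ᶜ := by
      ext ω
      simp only [Set.mem_setOf_eq, hM, Finset.lt_sup'_iff, Set.mem_compl_iff,
        Set.mem_iInter, Set.mem_preimage, Set.mem_Iic, not_forall, not_le, Finset.mem_univ,
        true_and]
    have hinter : μ (⋂ i, X i ⁻¹' Set.Iic t) = ∏ i : Fin η, μ (X i ⁻¹' Set.Iic t) := by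
      refine hind.meas_iInter (fun i => ⟨Set.Iic t, measurableSet_Iic, rfl⟩)
    have hsingle : ∀ i, μ (X i ⁻¹' Set.Iic t) = ENNReal.ofReal (1 - Real.exp (-t)) := by
      intro i
      have hc : X i ⁻¹' Set.Iic t = {ω | t < X i ω}ᶜ := by
        ext ω; simp [not_lt]
      rw [hc, measure_compl (measurableSet_lt measurable_const (hXm i)) (measure_ne_top μ _),
        hexp i t ht]
      simp [ENNReal.ofReal_sub _ (le_of_lt hexp0), measure_univ]
    rw [hset, measure_compl, hinter]
    · simp only [hsingle, Finset.prod_const, Finset.card_univ, Fintype.card_fin]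
      rw [← ENNReal.ofReal_pow (by linarith), measure_univ,
        ENNReal.ofReal_sub _ (pow_nonneg (by linarith) _), ENNReal.ofReal_one]
    · exact MeasurableSet.iInter (fun i => (hXm i) measurableSet_Iic)
    · exact measure_ne_top μ _
  have hlin : ∫⁻ ω, ENNReal.ofReal (M ω) ∂μ
      = ENNReal.ofReal (∑ k ∈ Finset.range η, (1:ℝ)/(k+1)) := by
    rw [lintegral_eq_lintegral_meas_lt μ (Filter.Eventually.of_forall hM0) hMm.aemeasurable]
    have h1 : ∫⁻ t in Set.Ioi (0:ℝ), μ {a | t < M a}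
        = ∫⁻ t in Set.Ioi (0:ℝ), ENNReal.ofReal (1 - (1 - Real.exp (-t))^η) := by
      refine lintegral_congr_ae ?_
      filter_upwards [ae_restrict_mem measurableSet_Ioi] with t ht
      exact htail t (le_of_lt ht)
    rw [h1, ← ofReal_integral_eq_lintegral_ofReal (tail_integrable η), tail_integral η]
    filter_upwards [ae_restrict_mem measurableSet_Ioi] with t ht
    have hexp1 : Real.exp (-t) ≤ 1 := Real.exp_le_one_iff.2 (by linarith [le_of_lt (Set.mem_Ioi.mp ht)])
    have hexp0 : 0 < Real.exp (-t) := Real.exp_pos _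
    have : (1 - Real.exp (-t))^η ≤ 1 := pow_le_one₀ (by linarith) (by linarith)
    simp only [Pi.zero_apply]; linarith
  have hint : Integrable M μ := by
    refine ⟨hMm.aestronglyMeasurable, ?_⟩
    rw [hasFiniteIntegral_iff_ofReal (Filter.Eventually.of_forall hM0), hlin]
    exact ENNReal.ofReal_lt_top
  refine ⟨hint, ?_⟩
  rw [integral_eq_lintegral_of_nonneg_ae (Filter.Eventually.of_forall hM0)
    hMm.aestronglyMeasurable, hlin, ENNReal.toReal_ofReal]
  positivity

lemma geom_norm_bound (z : ℂ) (hz : z ≠ 1) (h1 : ‖z‖ = 1) (N : ℕ) :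
    ‖∑ k ∈ Finset.range N, z^k‖ ≤ 2 / ‖1 - z‖ := by
  rw [geom_sum_eq hz N]
  rw [norm_div]
  have h2 : ‖z - 1‖ = ‖1 - z‖ := norm_sub_rev z 1
  have h3 : (0:ℝ) < ‖1 - z‖ := by
    rw [norm_pos_iff]; intro h; apply hz; linear_combination -h
  rw [h2]
  gcongr
  calc ‖z^N - 1‖ ≤ ‖z^N‖ + ‖(1:ℂ)‖ := norm_sub_le _ _
    _ = 2 := by rw [norm_pow, h1]; norm_num

lemma key_identity (η Nr Nt : ℕ) (c : ℂ) (g : Fin η → ℂ) (φv θv : Fin η → ℝ)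
    (i0 : Fin η) (r1 r2 : ℝ) :
    ∑ a : Fin Nr, ∑ b : Fin Nt, (starRingEnd ℂ) (ula Nr (φv i0) a / (r1:ℂ)) *
      (c * ∑ i, g i * ula Nr (φv i) a * (starRingEnd ℂ) (ula Nt (θv i) b)) *
      (ula Nt (θv i0) b / (r2:ℂ))
    = (c / ((r1:ℂ) * r2)) * ∑ i, g i *
        (∑ k ∈ Finset.range Nr, (Complex.exp (Complex.I * ((φv i0 : ℂ) - (φv i : ℂ))))^k) *
        (∑ k ∈ Finset.range Nt, (Complex.exp (Complex.I * ((θv i : ℂ) - (θv i0 : ℂ))))^k) := by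
  have hz : ∀ (i : Fin η) (a : Fin Nr),
      (starRingEnd ℂ) (ula Nr (φv i0) a) * ula Nr (φv i) a
      = (Complex.exp (Complex.I * ((φv i0 : ℂ) - (φv i : ℂ))))^(a:ℕ) := by
    intro i a
    unfold ula
    rw [← Complex.exp_conj, ← Complex.exp_add, ← Complex.exp_nat_mul]
    congr 1
    simp only [map_mul, map_neg, Complex.conj_I, Complex.conj_natCast, Complex.conj_ofReal]
    ring
  have hw : ∀ (i : Fin η) (b : Fin Nt),
      (starRingEnd ℂ) (ula Nt (θv i) b) * ula Nt (θv i0) b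
      = (Complex.exp (Complex.I * ((θv i : ℂ) - (θv i0 : ℂ))))^(b:ℕ) := by
    intro i b
    unfold ula
    rw [← Complex.exp_conj, ← Complex.exp_add, ← Complex.exp_nat_mul]
    congr 1
    simp only [map_mul, map_neg, Complex.conj_I, Complex.conj_natCast, Complex.conj_ofReal]
    ring
  calc ∑ a : Fin Nr, ∑ b : Fin Nt, (starRingEnd ℂ) (ula Nr (φv i0) a / (r1:ℂ)) *
      (c * ∑ i, g i * ula Nr (φv i) a * (starRingEnd ℂ) (ula Nt (θv i) b)) *
      (ula Nt (θv i0) b / (r2:ℂ))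
      = ∑ a : Fin Nr, ∑ b : Fin Nt, ∑ i, (c / ((r1:ℂ) * r2)) * (g i *
          (((starRingEnd ℂ) (ula Nr (φv i0) a) * ula Nr (φv i) a) *
           ((starRingEnd ℂ) (ula Nt (θv i) b) * ula Nt (θv i0) b))) := by
        refine Finset.sum_congr rfl fun a _ => Finset.sum_congr rfl fun b _ => ?_
        rw [Finset.mul_sum, Finset.mul_sum, Finset.sum_mul]
        refine Finset.sum_congr rfl fun i _ => ?_
        rw [map_div₀, Complex.conj_ofReal]
        field_simp
    _ = ∑ i, ∑ a : Fin Nr, ∑ b : Fin Nt, (c / ((r1:ℂ) * r2)) * (g i *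
          ((Complex.exp (Complex.I * ((φv i0 : ℂ) - (φv i : ℂ))))^(a:ℕ) *
           (Complex.exp (Complex.I * ((θv i : ℂ) - (θv i0 : ℂ))))^(b:ℕ))) := by
        simp_rw [hz, hw]
        exact (Finset.sum_congr rfl fun a _ => Finset.sum_comm).trans Finset.sum_comm
    _ = _ := by
        rw [Finset.mul_sum]
        refine Finset.sum_congr rfl fun i _ => ?_
        rw [← Fin.sum_univ_eq_sum_range, ← Fin.sum_univ_eq_sum_range, mul_assoc (g i),
          Finset.sum_mul_sum]
        simp only [Finset.mul_sum]

lemma tendsto_main (η : ℕ) (c : ℂ) (g z w : Fin η → ℂ) (i0 : Fin η)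
    (hz1 : ∀ i, ‖z i‖ = 1) (hw1 : ∀ i, ‖w i‖ = 1)
    (hzne : ∀ i, i ≠ i0 → z i ≠ 1) (hwne : ∀ i, i ≠ i0 → w i ≠ 1)
    (hz0 : z i0 = 1) (hw0 : w i0 = 1) :
    Tendsto (fun p : ℕ × ℕ => (c / ((p.1:ℂ) * (p.2:ℂ))) *
      ∑ i, g i * (∑ k ∈ Finset.range p.1, z i ^ k) * (∑ k ∈ Finset.range p.2, w i ^ k))
      (atTop ×ˢ atTop) (nhds (c * g i0)) := by
  set B : Fin η → ℝ := fun i => ‖g i‖ * (2/‖1 - z i‖) * (2/‖1 - w i‖) with hB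
  set C : ℝ := ‖c‖ * ∑ i ∈ Finset.univ.erase i0, B i with hC
  have hCnn : 0 ≤ C := by
    apply mul_nonneg (norm_nonneg _)
    apply Finset.sum_nonneg
    intro i _
    apply mul_nonneg (mul_nonneg (norm_nonneg _) _) _ <;> positivity
  rw [tendsto_iff_norm_sub_tendsto_zero]
  have hmul : Tendsto (fun p : ℕ × ℕ => ((p.1:ℝ) * (p.2:ℝ))) (atTop ×ˢ atTop) atTop :=
    (tendsto_natCast_atTop_atTop.comp tendsto_fst).atTop_mul_atTop₀
      (tendsto_natCast_atTop_atTop.comp tendsto_snd)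
  have hlim : Tendsto (fun p : ℕ × ℕ => C / ((p.1:ℝ) * (p.2:ℝ))) (atTop ×ˢ atTop) (nhds 0) :=
    tendsto_const_nhds.div_atTop hmul
  apply squeeze_zero_norm' ?_ hlim
  filter_upwards [Filter.prod_mem_prod (eventually_ge_atTop 1) (eventually_ge_atTop 1)]
    with p hp
  obtain ⟨hp1, hp2⟩ : 1 ≤ p.1 ∧ 1 ≤ p.2 := hp
  have hp1' : (0:ℝ) < p.1 := by exact_mod_cast hp1
  have hp2' : (0:ℝ) < p.2 := by exact_mod_cast hp2
  have hp1c : ((p.1:ℕ):ℂ) ≠ 0 := by exact_mod_cast (by positivity : (p.1:ℝ) ≠ 0)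
  have hp2c : ((p.2:ℕ):ℂ) ≠ 0 := by exact_mod_cast (by positivity : (p.2:ℝ) ≠ 0)
  have hsum : ∑ i, g i * (∑ k ∈ Finset.range p.1, z i ^ k) * (∑ k ∈ Finset.range p.2, w i ^ k)
      = g i0 * (p.1:ℂ) * (p.2:ℂ)
        + ∑ i ∈ Finset.univ.erase i0,
            g i * (∑ k ∈ Finset.range p.1, z i ^ k) * (∑ k ∈ Finset.range p.2, w i ^ k) := by
    rw [← Finset.add_sum_erase _ _ (Finset.mem_univ i0)]
    congr 1
    rw [hz0, hw0]
    simp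
  have hid : (c / ((p.1:ℂ) * (p.2:ℂ))) *
      (∑ i, g i * (∑ k ∈ Finset.range p.1, z i ^ k) * (∑ k ∈ Finset.range p.2, w i ^ k))
      - c * g i0
      = (c / ((p.1:ℂ) * (p.2:ℂ))) * ∑ i ∈ Finset.univ.erase i0,
          g i * (∑ k ∈ Finset.range p.1, z i ^ k) * (∑ k ∈ Finset.range p.2, w i ^ k) := by
    rw [hsum]
    field_simp
    ring
  rw [hid]
  simp only [norm_norm, norm_mul, norm_div, RCLike.norm_natCast]
  have hsumbound : ‖∑ i ∈ Finset.univ.erase i0,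
      g i * (∑ k ∈ Finset.range p.1, z i ^ k) * (∑ k ∈ Finset.range p.2, w i ^ k)‖
      ≤ ∑ i ∈ Finset.univ.erase i0, B i := by
    apply (norm_sum_le _ _).trans
    apply Finset.sum_le_sum
    intro i hi
    have hine : i ≠ i0 := Finset.ne_of_mem_erase hi
    rw [norm_mul, norm_mul]
    have b1 := geom_norm_bound (z i) (hzne i hine) (hz1 i) p.1
    have b2 := geom_norm_bound (w i) (hwne i hine) (hw1 i) p.2
    apply mul_le_mul (mul_le_mul le_rfl b1 (norm_nonneg _) (norm_nonneg _)) b2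
      (norm_nonneg _)
    positivity
  calc ‖c‖ / ((p.1:ℝ) * (p.2:ℝ)) * ‖∑ i ∈ Finset.univ.erase i0,
        g i * (∑ k ∈ Finset.range p.1, z i ^ k) * (∑ k ∈ Finset.range p.2, w i ^ k)‖
      ≤ ‖c‖ / ((p.1:ℝ) * (p.2:ℝ)) * ∑ i ∈ Finset.univ.erase i0, B i := by
        apply mul_le_mul_of_nonneg_left hsumbound
        positivity
    _ = C / ((p.1:ℝ) * (p.2:ℝ)) := by rw [hC]; field_simp

end Aux

theorem correction_factor_independent_fading
    {Ω : Type*} [MeasurableSpace Ω] (μ : Measure Ω) [IsProbabilityMeasure μ]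
    (η : ℕ) (hη : 0 < η) (ℓ : ℝ) (hℓ : 0 < ℓ)
    (γ : Fin η → Ω → ℂ) (φ θ : Fin η → Ω → ℝ)
    (hγm : ∀ i, Measurable (γ i)) (hφm : ∀ i, Measurable (φ i))
    (hθm : ∀ i, Measurable (θ i))
    (hiid_indep : iIndepFun (fun i ω => ‖γ i ω‖ ^ 2) μ)
    (hiid_exp : ∀ i, ∀ t : ℝ, 0 ≤ t →
      μ {ω | t < ‖γ i ω‖ ^ 2} = ENNReal.ofReal (Real.exp (-t)))
    (hindep : IndepFun (fun ω i => γ i ω)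
      (fun ω => ((fun i => φ i ω), (fun i => θ i ω))) μ)
    (hangles : ∀ᵐ ω ∂μ, ∀ i k : Fin η, i ≠ k →
      Complex.exp (Complex.I * ((φ i ω : ℂ) - (φ k ω : ℂ))) ≠ 1 ∧
      Complex.exp (Complex.I * ((θ i ω : ℂ) - (θ k ω : ℂ))) ≠ 1)
    (I : Ω → Fin η) (hIm : Measurable I)
    (hImax : ∀ ω, ∀ i, ‖γ i ω‖ ≤ ‖γ (I ω) ω‖)
    (H : (Nr : ℕ) → (Nt : ℕ) → Ω → Fin Nr → Fin Nt → ℂ)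
    (hH : ∀ Nr Nt ω, H Nr Nt ω = fun a b => (Real.sqrt (ℓ / η) : ℂ) *
      ∑ i, γ i ω * ula Nr (φ i ω) a * (starRingEnd ℂ) (ula Nt (θ i ω) b))
    (P : ℕ → ℕ → Ω → ℝ)
    (hP : ∀ Nr Nt ω, P Nr Nt ω =
      ‖∑ a, ∑ b, (starRingEnd ℂ) (ula Nr (φ (I ω) ω) a / (Real.sqrt Nr : ℂ)) *
        H Nr Nt ω a b * (ula Nt (θ (I ω) ω) b / (Real.sqrt Nt : ℂ))‖ ^ 2) :
    (∀ᵐ ω ∂μ, Tendsto (fun p : ℕ × ℕ => P p.1 p.2 ω / ((p.1 : ℝ) * (p.2 : ℝ)))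
        (atTop ×ˢ atTop)
        (nhds (ℓ * (Finset.univ.sup' (Finset.univ_nonempty_iff.mpr ⟨⟨0, hη⟩⟩)
          fun i => ‖γ i ω‖ ^ 2) / η))) ∧
    (∫ ω, ℓ * (Finset.univ.sup' (Finset.univ_nonempty_iff.mpr ⟨⟨0, hη⟩⟩)
        fun i => ‖γ i ω‖ ^ 2) / η ∂μ =
      ℓ * ((1 / η) * ∑ k ∈ Finset.range η, (1 : ℝ) / (k + 1))) ∧
    ((∫ ω, ℓ * (Finset.univ.sup' (Finset.univ_nonempty_iff.mpr ⟨⟨0, hη⟩⟩)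
        fun i => ‖γ i ω‖ ^ 2) / η ∂μ) / ℓ =
      (1 / η) * ∑ k ∈ Finset.range η, (1 : ℝ) / (k + 1)) := by
  have hηR : (0:ℝ) < η := by exact_mod_cast hη
  set ne : (Finset.univ : Finset (Fin η)).Nonempty := Finset.univ_nonempty_iff.mpr ⟨⟨0, hη⟩⟩
  set c : ℂ := (Real.sqrt (ℓ / η) : ℂ) with hc
  have hcnorm : ‖c‖^2 = ℓ / η := by
    rw [hc, Complex.norm_real, Real.norm_eq_abs,
      _root_.abs_of_nonneg (Real.sqrt_nonneg _), Real.sq_sqrt (by positivity)]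
  -- Part 2
  have hpart2 : ∫ ω, ℓ * (Finset.univ.sup' ne fun i => ‖γ i ω‖ ^ 2) / η ∂μ =
      ℓ * ((1 / η) * ∑ k ∈ Finset.range η, (1 : ℝ) / (k + 1)) := by
    have hmax := max_exp_integral μ η (fun i ω => ‖γ i ω‖^2)
      (fun i => ((hγm i).norm).pow_const 2) (fun i ω => by positivity)
      hiid_indep hiid_exp ne
    have heq : (fun ω => ℓ * (Finset.univ.sup' ne fun i => ‖γ i ω‖ ^ 2) / η)
        = fun ω => (ℓ / η) * (Finset.univ.sup' ne fun i => ‖γ i ω‖ ^ 2) := by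
      funext ω; ring
    rw [heq, integral_const_mul, hmax.2]
    field_simp
  refine ⟨?_, hpart2, by rw [hpart2]; field_simp⟩
  -- Part 1
  filter_upwards [hangles] with ω hω
  set i0 : Fin η := I ω with hi0
  set g : Fin η → ℂ := fun i => γ i ω with hg
  set z : Fin η → ℂ := fun i => Complex.exp (Complex.I * ((φ i0 ω : ℂ) - (φ i ω : ℂ))) with hz
  set w : Fin η → ℂ := fun i => Complex.exp (Complex.I * ((θ i ω : ℂ) - (θ i0 ω : ℂ))) with hw
  have hnorm1 : ∀ x y : ℝ, ‖Complex.exp (Complex.I * ((x : ℂ) - (y : ℂ)))‖ = 1 := by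
    intro x y
    rw [show ((x:ℂ) - (y:ℂ)) = ((x - y : ℝ) : ℂ) by push_cast; ring, mul_comm,
      Complex.norm_exp_ofReal_mul_I]
  have hz1 : ∀ i, ‖z i‖ = 1 := fun i => hnorm1 _ _
  have hw1 : ∀ i, ‖w i‖ = 1 := fun i => hnorm1 _ _
  have hzne : ∀ i, i ≠ i0 → z i ≠ 1 := fun i hi => (hω i0 i (Ne.symm hi)).1
  have hwne : ∀ i, i ≠ i0 → w i ≠ 1 := fun i hi => (hω i i0 hi).2
  have hz0 : z i0 = 1 := by rw [hz]; simp
  have hw0 : w i0 = 1 := by rw [hw]; simp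
  have hA := tendsto_main η c g z w i0 hz1 hw1 hzne hwne hz0 hw0
  have hB : Tendsto (fun p : ℕ × ℕ => ‖(c / ((p.1:ℂ) * (p.2:ℂ))) *
      ∑ i, g i * (∑ k ∈ Finset.range p.1, z i ^ k) * (∑ k ∈ Finset.range p.2, w i ^ k)‖^2)
      (atTop ×ˢ atTop) (nhds (‖c * g i0‖^2)) := (hA.norm).pow 2
  have hval : ‖c * g i0‖^2 = ℓ * (Finset.univ.sup' ne fun i => ‖γ i ω‖ ^ 2) / η := by
    have hsup : (Finset.univ.sup' ne fun i => ‖γ i ω‖ ^ 2) = ‖γ i0 ω‖^2 := by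
      apply le_antisymm
      · exact Finset.sup'_le _ _ fun i _ =>
          pow_le_pow_left₀ (norm_nonneg _) (hImax ω i) 2
      · exact Finset.le_sup' (fun i => ‖γ i ω‖ ^ 2) (Finset.mem_univ i0)
    rw [hsup, norm_mul, mul_pow, hcnorm, hg]
    field_simp
  rw [← hval]
  apply hB.congr'
  filter_upwards [Filter.prod_mem_prod (eventually_ge_atTop 1) (eventually_ge_atTop 1)]
    with p hp
  obtain ⟨hp1, hp2⟩ : 1 ≤ p.1 ∧ 1 ≤ p.2 := hp
  have hp1' : (0:ℝ) < p.1 := by exact_mod_cast hp1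
  have hp2' : (0:ℝ) < p.2 := by exact_mod_cast hp2
  -- rewrite P via key identity
  have hPeq : P p.1 p.2 ω = ‖(c / ((Real.sqrt p.1 : ℂ) * (Real.sqrt p.2 : ℂ))) *
      ∑ i, g i * (∑ k ∈ Finset.range p.1, z i ^ k) * (∑ k ∈ Finset.range p.2, w i ^ k)‖^2 := by
    rw [hP, hH]
    congr 2
    exact key_identity η p.1 p.2 c g (fun i => φ i ω) (fun i => θ i ω) i0
      (Real.sqrt p.1) (Real.sqrt p.2)
  rw [hPeq]
  set S : ℂ := ∑ i, g i * (∑ k ∈ Finset.range p.1, z i ^ k) *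
    (∑ k ∈ Finset.range p.2, w i ^ k) with hS
  simp only [norm_mul, norm_div, RCLike.norm_natCast, Complex.norm_real, Real.norm_eq_abs,
    map_mul]
  rw [_root_.abs_of_nonneg (Real.sqrt_nonneg _), _root_.abs_of_nonneg (Real.sqrt_nonneg _)]
  have hs1 : Real.sqrt p.1 ^ 2 = (p.1:ℝ) := Real.sq_sqrt (le_of_lt hp1')
  have hs2 : Real.sqrt p.2 ^ 2 = (p.2:ℝ) := Real.sq_sqrt (le_of_lt hp2')
  have hs1' : (0:ℝ) < Real.sqrt p.1 := Real.sqrt_pos.2 hp1'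
  have hs2' : (0:ℝ) < Real.sqrt p.2 := Real.sqrt_pos.2 hp2'
  have key : ∀ A B : ℝ, (A/((p.1:ℝ)*(p.2:ℝ))*B)^2
      = (A/(Real.sqrt p.1*Real.sqrt p.2)*B)^2/((p.1:ℝ)*(p.2:ℝ)) := by
    intro A B
    rw [mul_pow, mul_pow, div_pow, div_pow, mul_pow, mul_pow, hs1, hs2]
    field_simp
  exact key _ _
end
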